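/- arXiv:2405.05199 — 3 statements merged into one kernel-verified Lean document; each statement's English description precedes it below -/
import Mathlib

section
/- Let C be a nodal curve without separating nodes and let S be a C1-set of nodes of C, i.e., a set of nodes such that for some (equivalently, any) p ∈ S, the set S \ {p} equals the set of separating nodes of the normalization of C at p. Then the property defining S is independent of the choice of p ∈ S: if p, q ∈ S are distinct, then S \ {q} equals the set of separating nodes of the normalization of C at q. Consequently, the set of nodes of C admits a unique partition into C1-sets. -/
/-!
STATEMENT 11: Let `C` be a (connected) nodal curve without separating nodes and let `S`
be a C1-set of nodes of `C`: a set of nodes such that for some `p ∈ S`, the set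
`S \ {p}` equals the set of separating nodes of the normalization of `C` at `p`.  Then
this property is independent of the choice of `p ∈ S`: for every `q ∈ S`, `S \ {q}`
equals the set of separating nodes of the normalization of `C` at `q`.  Consequently the
set of nodes of `C` admits a unique partition into C1-sets.

Per Caporaso–Viviani this is equivalently a statement about the dual graph: nodes of `C`
are edges of a connected multigraph `Γ` with no bridges ("no separating nodes");
normalizing at a node `p` is deleting the edge `p`; a separating node of the (possibly
disconnected) partial normalization is a bridge of the resulting graph (an edge whose
removal disconnects its endpoints).  We formalize the graph statement.
-/

namespace Stmt11

variable {V E : Type*} [Fintype V] [Fintype E]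

/-- Reachability using only edges in `S`. -/
def reach (ends : E → V × V) (S : Set E) (a b : V) : Prop :=
  Relation.ReflTransGen (fun x y => ∃ e ∈ S, ends e = (x, y) ∨ ends e = (y, x)) a b

/-- `e` is a bridge of the graph with edge set `S`: removing it disconnects its two
endpoints. -/
def IsBridge (ends : E → V × V) (S : Set E) (e : E) : Prop :=
  e ∈ S ∧ ¬ reach ends (S \ {e}) (ends e).1 (ends e).2

/-- `S` is a C1-set of edges: for some `p ∈ S`, `S \ {p}` is exactly the set of bridges
of the graph with the edge `p` deleted. -/
def C1Set (ends : E → V × V) (S : Set E) : Prop :=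
  ∃ p ∈ S, S \ {p} = {e | IsBridge ends ({p}ᶜ) e}

end Stmt11

/-!
In a bridgeless graph, `q` is a bridge of `Γ - p` exactly when `{p, q}` is a 2-edge cut, i.e. the
set of edges crossing some vertex set `A` (take `A` = the component of one end of `q` in
`Γ - p - q`; `p` must cross it, else `q` would be a bridge of `Γ`). Being a 2-edge cut is
symmetric, and transitive on distinct edges: the edges crossing `A ∆ A'` (or its complement)
are those crossing exactly one of `A`, `A'`. So "`p = q` or `{p, q}` is a 2-edge cut" is an
equivalence relation, and the C1-sets are precisely its classes.
-/

namespace Stmt11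

variable {V E : Type*} {ends : E → V × V}

def Crosses (ends : E → V × V) (A : Set V) (e : E) : Prop :=
  ¬ ((ends e).1 ∈ A ↔ (ends e).2 ∈ A)

def IsTwoEdgeCut (ends : E → V × V) (p q : E) : Prop :=
  ∃ A : Set V, ∀ g, Crosses ends A g ↔ g = p ∨ g = q

def Bridgeless (ends : E → V × V) : Prop :=
  ∀ e : E, ¬ IsBridge ends Set.univ e

theorem mem_iff_mem_of_reach {S : Set E} {A : Set V} (hS : ∀ e ∈ S, ¬ Crosses ends A e)
    {a b : V} (hab : reach ends S a b) : a ∈ A ↔ b ∈ A := by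
  induction hab with
  | refl => exact Iff.rfl
  | tail _ hstep ih =>
    obtain ⟨e, he, hends | hends⟩ := hstep
    · simpa [Crosses, hends, ih] using hS e he
    · simpa [Crosses, hends, ih, Iff.comm] using hS e he

theorem exists_crosses_of_reach {S : Set E} {A : Set V} {a b : V} (hab : reach ends S a b)
    (ha : a ∈ A) (hb : b ∉ A) : ∃ e ∈ S, Crosses ends A e := by
  by_contra! h
  exact hb ((mem_iff_mem_of_reach h hab).mp ha)

theorem crosses_symmDiff {A A' : Set V} {g : E} :
    Crosses ends {v | v ∈ A ↔ v ∈ A'} g ↔ ¬ (Crosses ends A g ↔ Crosses ends A' g) := by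
  simp only [Crosses, Set.mem_ofPred_eq]
  tauto

theorem not_reach_of_crosses {S : Set E} {A : Set V} {e : E} (he : Crosses ends A e)
    (hS : ∀ g ∈ S, ¬ Crosses ends A g) : ¬ reach ends S (ends e).1 (ends e).2 :=
  fun hr => he (mem_iff_mem_of_reach hS hr)

theorem isTwoEdgeCut_of_not_reach (hΓ : Bridgeless ends) {p q : E} (hqp : q ≠ p)
    (h : ¬ reach ends ({p}ᶜ \ {q}) (ends q).1 (ends q).2) : IsTwoEdgeCut ends p q := by
  set S : Set E := {p}ᶜ \ {q}
  set A : Set V := {v | reach ends S (ends q).1 v}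
  have hS : ∀ g ∈ S, ¬ Crosses ends A g := fun g hg hcross =>
    hcross ⟨fun hx => hx.tail ⟨g, hg, Or.inl rfl⟩, fun hx => hx.tail ⟨g, hg, Or.inr rfl⟩⟩
  have hq : Crosses ends A q := fun hiff => h (hiff.mp .refl)
  have hp : Crosses ends A p := by
    have hr : reach ends (Set.univ \ {q}) (ends q).1 (ends q).2 := by
      by_contra hr
      exact hΓ q ⟨trivial, hr⟩
    obtain ⟨e, he, hcross⟩ := exists_crosses_of_reach hr .refl h
    obtain rfl : e = p := by
      by_contra hep
      exact hS e ⟨hep, he.2⟩ hcross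
    exact hcross
  refine ⟨A, fun g => ⟨fun hcross => ?_, ?_⟩⟩
  · by_contra! hg
    exact hS g hg hcross
  · rintro (rfl | rfl)
    exacts [hp, hq]

namespace IsTwoEdgeCut

theorem symm {p q : E} (h : IsTwoEdgeCut ends p q) : IsTwoEdgeCut ends q p :=
  let ⟨A, hA⟩ := h
  ⟨A, fun g => (hA g).trans or_comm⟩

theorem not_reach {p q : E} (h : IsTwoEdgeCut ends p q) :
    ¬ reach ends ({p}ᶜ \ {q}) (ends q).1 (ends q).2 := by
  obtain ⟨A, hA⟩ := h
  refine not_reach_of_crosses ((hA q).mpr (Or.inr rfl)) fun g hg hcross => ?_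
  rcases (hA g).mp hcross with rfl | rfl
  exacts [hg.1 rfl, hg.2 rfl]

theorem ne (hΓ : Bridgeless ends) {p q : E} (h : IsTwoEdgeCut ends p q) : p ≠ q := by
  rintro rfl
  obtain ⟨A, hA⟩ := h
  refine hΓ p ⟨trivial, not_reach_of_crosses ((hA p).mpr (Or.inl rfl)) fun g hg hcross => ?_⟩
  exact hg.2 (((hA g).mp hcross).elim id id)

theorem trans (hΓ : Bridgeless ends) {e f g : E} (h₁ : IsTwoEdgeCut ends e f)
    (h₂ : IsTwoEdgeCut ends f g) (heg : e ≠ g) : IsTwoEdgeCut ends e g := by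
  have hef := h₁.ne hΓ
  have hfg := h₂.ne hΓ
  obtain ⟨A, hA⟩ := h₁
  obtain ⟨A', hA'⟩ := h₂
  refine ⟨{v | v ∈ A ↔ v ∈ A'}, fun x => ?_⟩
  rw [crosses_symmDiff, hA, hA']
  grind

end IsTwoEdgeCut

theorem isBridge_compl_singleton_iff (hΓ : Bridgeless ends) {p q : E} :
    IsBridge ends {p}ᶜ q ↔ IsTwoEdgeCut ends p q :=
  ⟨fun ⟨hqp, hr⟩ => isTwoEdgeCut_of_not_reach hΓ hqp hr, fun h => ⟨(h.ne hΓ).symm, h.not_reach⟩⟩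

def twoEdgeCutClass (ends : E → V × V) (p : E) : Set E :=
  {e | e = p ∨ IsTwoEdgeCut ends p e}

theorem twoEdgeCutClass_eq_insert (hΓ : Bridgeless ends) (p : E) :
    twoEdgeCutClass ends p = insert p {e | IsBridge ends {p}ᶜ e} := by
  ext e
  simp only [twoEdgeCutClass, Set.mem_insert_iff, Set.mem_ofPred_eq,
    isBridge_compl_singleton_iff hΓ]

theorem twoEdgeCutClass_diff_singleton (hΓ : Bridgeless ends) (p : E) :
    twoEdgeCutClass ends p \ {p} = {e | IsBridge ends {p}ᶜ e} := by
  rw [twoEdgeCutClass_eq_insert hΓ, Set.insert_sdiff_self_of_notMem]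
  exact fun hp => hp.1 rfl

theorem twoEdgeCutClass_eq_of_mem (hΓ : Bridgeless ends) {p q : E}
    (hq : q ∈ twoEdgeCutClass ends p) : twoEdgeCutClass ends p = twoEdgeCutClass ends q := by
  rcases hq with rfl | hpq
  · rfl
  ext e
  constructor
  · rintro (rfl | hpe)
    · exact Or.inr hpq.symm
    · by_cases heq : e = q
      exacts [Or.inl heq, Or.inr (hpq.symm.trans hΓ hpe (Ne.symm heq))]
  · rintro (rfl | hqe)
    · exact Or.inr hpq
    · by_cases hep : e = p
      exacts [Or.inl hep, Or.inr (hpq.trans hΓ hqe (Ne.symm hep))]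

theorem c1Set_twoEdgeCutClass (hΓ : Bridgeless ends) (p : E) :
    C1Set ends (twoEdgeCutClass ends p) :=
  ⟨p, Or.inl rfl, twoEdgeCutClass_diff_singleton hΓ p⟩

theorem C1Set.eq_twoEdgeCutClass (hΓ : Bridgeless ends) {S : Set E} (hS : C1Set ends S)
    {q : E} (hq : q ∈ S) : S = twoEdgeCutClass ends q := by
  obtain ⟨p, hp, hSp⟩ := hS
  have hSp : S = twoEdgeCutClass ends p := by
    rw [twoEdgeCutClass_eq_insert hΓ, ← hSp, Set.insert_sdiff_singleton, Set.insert_eq_of_mem hp]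
  rw [hSp] at hq ⊢
  exact twoEdgeCutClass_eq_of_mem hΓ hq

end Stmt11

open Stmt11 in
theorem stmt_11_general {V E : Type*} (ends : E → V × V)
    -- `Γ` has no separating nodes (no bridges)
    (hnosep : ∀ e : E, ¬ IsBridge ends Set.univ e)
    (S : Set E) (hS : C1Set ends S) :
    -- the defining property of a C1-set holds for every choice of `q ∈ S`
    (∀ q ∈ S, S \ {q} = {e | IsBridge ends ({q}ᶜ) e}) ∧
    -- and the edge set admits a unique partition into C1-sets
    (∀ e : E, ∃! T : Set E, C1Set ends T ∧ e ∈ T) := by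
  refine ⟨fun q hq => ?_, fun e => ?_⟩
  · rw [hS.eq_twoEdgeCutClass hnosep hq, twoEdgeCutClass_diff_singleton hnosep]
  · refine ⟨twoEdgeCutClass ends e, ⟨c1Set_twoEdgeCutClass hnosep e, Or.inl rfl⟩, ?_⟩
    rintro T ⟨hT, heT⟩
    exact hT.eq_twoEdgeCutClass hnosep heT

open Stmt11 in
theorem stmt_11 {V E : Type*} [Fintype V] [Fintype E] (ends : E → V × V)
    -- `Γ` is connected
    (hconn : ∀ a b : V, reach ends Set.univ a b)
    -- `Γ` has no separating nodes (no bridges)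
    (hnosep : ∀ e : E, ¬ IsBridge ends Set.univ e)
    (S : Set E) (hS : C1Set ends S) :
    -- the defining property of a C1-set holds for every choice of `q ∈ S`
    (∀ q ∈ S, S \ {q} = {e | IsBridge ends ({q}ᶜ) e}) ∧
    -- and the edge set admits a unique partition into C1-sets
    (∀ e : E, ∃! T : Set E, C1Set ends T ∧ e ∈ T) :=
  stmt_11_general ends hnosep S hS
end

section
/- Let Γ be a stable n-pointed dual graph of genus g, and suppose Γ₀ ⇝ Γ₁ is a degeneration of stable dual graphs with v ∈ V(Γ₀) degenerating to the complete subgraph M_v ⊆ Γ₁. If v is a separating rational m-bridge of Γ₀ (i.e., v has genus 0, no legs, m ≥ 1 edges to its complement, and Γ₀ \ v has exactly m connected components, matching the number of edges), then M_v is a separating rational m-bridge of Γ₁. Conversely, if M_v is a separating rational m-bridge of Γ₁, then v is a separating rational m-bridge of Γ₀. Hence the assignment Γ ↦ {separating rational multibridges of Γ} is an extremal assignment. -/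
/-!
STATEMENT 12: Let `Γ` be a stable `n`-pointed dual graph of genus `g`, and let
`Γ₀ ⇝ Γ₁` be a degeneration of stable dual graphs, with `v ∈ V(Γ₀)` degenerating to the
complete subgraph `M_v ⊆ Γ₁` (the preimage of `v` under the contraction).  If `v` is a
separating rational `m`-bridge of `Γ₀` (genus 0, no legs, `m` edges to its complement,
complement with exactly `m` connected components), then `M_v` is a separating rational
`m`-bridge of `Γ₁`; and conversely.  Hence the assignment
`Γ ↦ {vertices lying on separating rational multibridges of Γ}` is an extremal
assignment: it takes `Aut`-invariant proper subsets of `V(Γ)` and is compatible with all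
degenerations.

Dual graphs are modelled as genus-labelled multigraphs with legs; degenerations are
modelled combinatorially (a vertex contraction `φ : V(Γ₁) → V(Γ₀)` with connected fibers
and a matching of the persisting edges, legs and genera), as induced by a family of
stable curves over a DVR.
-/

namespace Stmt12

/-- Reachability in a multigraph using only edges in `S`. -/
def reach {V E : Type} (ends : E → V × V) (S : Set E) (a b : V) : Prop :=
  Relation.ReflTransGen (fun x y => ∃ e ∈ S, ends e = (x, y) ∨ ends e = (y, x)) a b

/-- Number of connected components of the subgraph with vertices `W` and edge set `S`. -/
noncomputable def numComponents {V E : Type} (ends : E → V × V) (W : Set V)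
    (S : Set E) : ℕ :=
  Nat.card (Quot (fun a b : W => reach ends S (a : V) (b : V)))

/-- Edges with both endpoints in `W`. -/
def edgesIn {V E : Type} (ends : E → V × V) (W : Set V) : Set E :=
  {e | (ends e).1 ∈ W ∧ (ends e).2 ∈ W}

/-- Edges between `W` and `T`. -/
def crossEdges {V E : Type} (ends : E → V × V) (W T : Set V) : Set E :=
  {e | ((ends e).1 ∈ W ∧ (ends e).2 ∈ T) ∨ ((ends e).1 ∈ T ∧ (ends e).2 ∈ W)}

/-- A stable `n`-pointed dual graph: a finite connected multigraph with genus labels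
and `n` legs, satisfying the stability condition `2g(v) − 2 + val(v) > 0` at every
vertex. -/
structure StableGraph (n : ℕ) where
  V : Type
  E : Type
  finV : Fintype V
  finE : Fintype E
  ends : E → V × V
  genus : V → ℕ
  leg : Fin n → V
  conn : ∀ a b : V, reach ends Set.univ a b
  stable : ∀ v : V,
    2 < 2 * genus v + (({e | (ends e).1 = v} : Set E).ncard +
      ({e | (ends e).2 = v} : Set E).ncard + ({i | leg i = v} : Set (Fin n)).ncard)

attribute [instance] StableGraph.finV StableGraph.finE

/-- The total (arithmetic) genus of a dual graph: sum of the genus labels plus the first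
Betti number `#E − #V + 1`. -/
noncomputable def totalGenus {n : ℕ} (Γ : StableGraph n) : ℤ :=
  (∑ v : Γ.V, (Γ.genus v : ℤ)) + (Nat.card Γ.E : ℤ) - (Nat.card Γ.V : ℤ) + 1

/-- `W` is a separating rational multibridge of `Γ`: a nonempty proper set of genus-0
vertices carrying no legs, whose induced subgraph is a tree (connected with
`#V − 1` internal edges), such that the complement has exactly as many connected
components as there are edges from `W` to the complement. -/
def IsSepRatMultibridge {n : ℕ} (Γ : StableGraph n) (W : Set Γ.V) : Prop :=
  W.Nonempty ∧ W ≠ Set.univ ∧ (∀ w ∈ W, Γ.genus w = 0) ∧ (∀ i, Γ.leg i ∉ W) ∧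
    numComponents Γ.ends W (edgesIn Γ.ends W) = 1 ∧
    (edgesIn Γ.ends W).ncard + 1 = W.ncard ∧
    numComponents Γ.ends Wᶜ (edgesIn Γ.ends Wᶜ) = (crossEdges Γ.ends W Wᶜ).ncard

/-- A (combinatorial) degeneration `Γ₀ ⇝ Γ₁` of stable dual graphs, as induced by a
flat family of stable `n`-pointed curves over a DVR: a contraction `φ` on vertices with
connected fibers, an injective matching `ψ` of the edges of `Γ₀` with the non-contracted
edges of `Γ₁`, compatibility of endpoints and legs, and preservation of genus on each
fiber. -/
structure Degeneration {n : ℕ} (Γ₀ Γ₁ : StableGraph n) where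
  φ : Γ₁.V → Γ₀.V
  ψ : Γ₀.E → Γ₁.E
  ψinj : Function.Injective ψ
  ends_comm : ∀ e : Γ₀.E,
    (φ (Γ₁.ends (ψ e)).1, φ (Γ₁.ends (ψ e)).2) = Γ₀.ends e ∨
    (φ (Γ₁.ends (ψ e)).2, φ (Γ₁.ends (ψ e)).1) = Γ₀.ends e
  contracted : ∀ e : Γ₁.E, e ∉ Set.range ψ → φ (Γ₁.ends e).1 = φ (Γ₁.ends e).2
  fiber_conn : ∀ v : Γ₀.V,
    numComponents Γ₁.ends (φ ⁻¹' {v}) {e | e ∉ Set.range ψ ∧ (Γ₁.ends e).1 ∈ φ ⁻¹' {v}}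
      = 1
  genus_eq : ∀ v : Γ₀.V,
    (Γ₀.genus v : ℤ) = (∑ w : Γ₁.V, Set.indicator (φ ⁻¹' {v}) (fun w => (Γ₁.genus w : ℤ)) w) +
      (({e | e ∉ Set.range ψ ∧ (Γ₁.ends e).1 ∈ φ ⁻¹' {v}} : Set Γ₁.E).ncard : ℤ) -
      ((φ ⁻¹' {v}).ncard : ℤ) + 1
  leg_comm : ∀ i : Fin n, φ (Γ₁.leg i) = Γ₀.leg i

/-- An isomorphism of stable dual graphs. -/
structure GraphIso {n : ℕ} (Γ Γ' : StableGraph n) where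
  vEquiv : Γ.V ≃ Γ'.V
  eEquiv : Γ.E ≃ Γ'.E
  ends_comm : ∀ e : Γ.E,
    Γ'.ends (eEquiv e) = (vEquiv (Γ.ends e).1, vEquiv (Γ.ends e).2) ∨
    Γ'.ends (eEquiv e) = (vEquiv (Γ.ends e).2, vEquiv (Γ.ends e).1)
  genus_comm : ∀ v : Γ.V, Γ'.genus (vEquiv v) = Γ.genus v
  leg_comm : ∀ i : Fin n, vEquiv (Γ.leg i) = Γ'.leg i

/-- Smyth's extremal assignments (Definition 1.5): `Aut`-invariant proper subsets of the
vertex sets, compatible with all degenerations. -/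
def IsExtremalAssignment (g : ℤ) (n : ℕ)
    (Z : ∀ Γ : StableGraph n, Set Γ.V) : Prop :=
  (∀ Γ : StableGraph n, totalGenus Γ = g → Z Γ ≠ Set.univ) ∧
  (∀ Γ : StableGraph n, totalGenus Γ = g → ∀ σ : GraphIso Γ Γ, ∀ v : Γ.V,
    v ∈ Z Γ ↔ σ.vEquiv v ∈ Z Γ) ∧
  (∀ Γ₀ Γ₁ : StableGraph n, totalGenus Γ₀ = g → totalGenus Γ₁ = g →
    ∀ D : Degeneration Γ₀ Γ₁, ∀ v : Γ₀.V,
      v ∈ Z Γ₀ ↔ (D.φ ⁻¹' {v}) ⊆ Z Γ₁)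

/-- The assignment `Γ ↦ {vertices on separating rational multibridges}`. -/
def sepAssignment (n : ℕ) : ∀ Γ : StableGraph n, Set Γ.V :=
  fun Γ => {v | ∃ W : Set Γ.V, IsSepRatMultibridge Γ W ∧ v ∈ W}

end Stmt12

/-!
Write `M_v = φ⁻¹(v)`. Since the fibers of `φ` are connected through contracted edges, paths in
`φ⁻¹(U)` and in `U` correspond for every `U ⊆ V(Γ₀)`, so `φ` preserves components of
`φ⁻¹(U)`, and the crossing edges of `φ⁻¹(U)` are exactly the images of those of `U`. Applied
to `U = {v}` and `U = {v}ᶜ` this matches all separation conditions for `{v}` and `M_v`; the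
genus formula `g(v) = Σ g(w) + b₁(M_v)` matches the conditions "rational and loopless" and
"tree of rational curves".

For extremality, a connected set `W` of a connected graph is a tree whose complement has one
component per crossing edge iff every edge at `W` is a bridge. Hence a connected proper set is a
multibridge as soon as each of its vertices lies on one, which gives compatibility with
degenerations; an isomorphism is a degeneration with singleton fibers. If every vertex lay on a
multibridge there would be no legs and every edge would be a bridge, forcing genus `≤ 1`.
-/

namespace Stmt12

section Reach

variable {V E : Type} {ends : E → V × V} {S T : Set E} {a b c : V} {e : E}

theorem reach.refl : reach ends S a a := Relation.ReflTransGen.refl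

theorem reach.single (h : ∃ e ∈ S, ends e = (a, b) ∨ ends e = (b, a)) : reach ends S a b :=
  Relation.ReflTransGen.single h

theorem reach.trans (h : reach ends S a b) (h' : reach ends S b c) : reach ends S a c :=
  Relation.ReflTransGen.trans h h'

theorem reach.symm (h : reach ends S a b) : reach ends S b a := by
  induction h with
  | refl => exact reach.refl
  | tail _ hstep ih =>
    obtain ⟨e, he, hends⟩ := hstep
    exact (reach.single ⟨e, he, hends.symm⟩).trans ih

theorem reach.mono (hST : S ⊆ T) (h : reach ends S a b) : reach ends T a b :=
  Relation.ReflTransGen.mono (fun _ _ ⟨e, he, h⟩ => ⟨e, hST he, h⟩) _ _ h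

theorem reach_ends (he : e ∈ S) : reach ends S (ends e).1 (ends e).2 :=
  reach.single ⟨e, he, Or.inl rfl⟩

theorem reach_empty_iff : reach ends (∅ : Set E) a b ↔ a = b := by
  refine ⟨fun h => ?_, fun h => h ▸ reach.refl⟩
  induction h with
  | refl => rfl
  | tail _ h => obtain ⟨e, he, -⟩ := h; exact absurd he (Set.notMem_empty e)

theorem reach_insert_cases (h : reach ends (insert e S) a b) :
    reach ends S a b ∨
      (reach ends S a (ends e).1 ∧ reach ends S (ends e).2 b) ∨
      (reach ends S a (ends e).2 ∧ reach ends S (ends e).1 b) := by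
  induction h with
  | refl => exact Or.inl reach.refl
  | @tail c d _ hstep ih =>
    obtain ⟨f, hf, hends⟩ := hstep
    rcases hf with rfl | hf
    · rcases hends with h | h <;> rw [h] <;>
        rcases ih with h1 | ⟨h1, -⟩ | ⟨h1, -⟩ <;> simp_all [reach.refl]
    · have hcd : reach ends S c d := reach.single ⟨f, hf, hends⟩
      rcases ih with h1 | ⟨h1, h2⟩ | ⟨h1, h2⟩
      · exact Or.inl (h1.trans hcd)
      · exact Or.inr (Or.inl ⟨h1, h2.trans hcd⟩)
      · exact Or.inr (Or.inr ⟨h1, h2.trans hcd⟩)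

theorem reach_of_reach_insert (he : reach ends S (ends e).1 (ends e).2)
    (h : reach ends (insert e S) a b) : reach ends S a b := by
  rcases reach_insert_cases h with h1 | ⟨h1, h2⟩ | ⟨h1, h2⟩
  · exact h1
  · exact h1.trans (he.trans h2)
  · exact h1.trans (he.symm.trans h2)

def IsBridge (ends : E → V × V) (e : E) : Prop :=
  ¬ reach ends {e}ᶜ (ends e).1 (ends e).2

end Reach

section Components

variable {V E : Type} {ends : E → V × V} {S : Set E} {W : Set V} {e : E}

abbrev Component (ends : E → V × V) (W : Set V) (S : Set E) : Type :=
  Quot (fun a b : W => reach ends S (a : V) (b : V))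

theorem numComponents_eq_card : numComponents ends W S = Nat.card (Component ends W S) := rfl

theorem Component.mk_eq_iff {a b : W} :
    (Quot.mk _ a : Component ends W S) = Quot.mk _ b ↔ reach ends S (a : V) (b : V) :=
  Quot.eq.trans (Equivalence.eqvGen_iff ⟨fun _ => reach.refl, reach.symm, reach.trans⟩)

instance [Finite V] : Finite (Component ends W S) := Quot.finite _

theorem numComponents_eq_one_iff [Finite V] :
    numComponents ends W S = 1 ↔ W.Nonempty ∧ ∀ a b : W, reach ends S (a : V) (b : V) := by
  rw [numComponents_eq_card, Nat.card_eq_one_iff_unique]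
  constructor
  · rintro ⟨hs, ⟨q⟩⟩
    obtain ⟨a, -⟩ := Quot.exists_rep q
    exact ⟨⟨a, a.2⟩, fun x y => Component.mk_eq_iff.mp (hs.allEq _ _)⟩
  · rintro ⟨⟨a, ha⟩, h⟩
    refine ⟨⟨fun p q => ?_⟩, ⟨Quot.mk _ ⟨a, ha⟩⟩⟩
    obtain ⟨x, rfl⟩ := Quot.exists_rep p
    obtain ⟨y, rfl⟩ := Quot.exists_rep q
    exact Component.mk_eq_iff.mpr (h x y)

theorem numComponents_singleton [Finite V] (v : V) (S : Set E) :
    numComponents ends {v} S = 1 :=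
  numComponents_eq_one_iff.mpr ⟨⟨v, rfl⟩, fun ⟨_, ha⟩ ⟨_, hb⟩ => by
    rw [Set.mem_singleton_iff] at ha hb
    subst ha hb
    exact reach.refl⟩

theorem numComponents_empty [Finite V] : numComponents ends W (∅ : Set E) = W.ncard := by
  rw [numComponents_eq_card, ← Nat.card_coe_set_eq]
  refine Nat.card_eq_of_bijective
    (Quot.lift id fun a b h => Subtype.ext (reach_empty_iff.mp h)) ⟨?_, fun a => ⟨Quot.mk _ a, rfl⟩⟩
  rintro ⟨a⟩ ⟨b⟩ h
  exact congrArg _ h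

theorem numComponents_eq_of_reach_iff {V' E' : Type} {ends' : E' → V' × V'} {W' : Set V'}
    {S' : Set E'} (f : V → V') (hf : Set.MapsTo f W W') (hsurj : Set.SurjOn f W W')
    (hreach : ∀ a ∈ W, ∀ b ∈ W, reach ends' S' (f a) (f b) ↔ reach ends S a b) :
    numComponents ends' W' S' = numComponents ends W S := by
  let F : Component ends W S → Component ends' W' S' :=
    Quot.lift (fun a => Quot.mk _ ⟨f a, hf a.2⟩)
      fun a b h => Component.mk_eq_iff.mpr ((hreach a a.2 b b.2).mpr h)
  refine (Nat.card_eq_of_bijective F ⟨?_, ?_⟩).symm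
  · rintro ⟨a⟩ ⟨b⟩ h
    exact Component.mk_eq_iff.mpr ((hreach a a.2 b b.2).mp (Component.mk_eq_iff.mp h))
  · rintro ⟨⟨a', ha'⟩⟩
    obtain ⟨a, ha, rfl⟩ := hsurj ha'
    exact ⟨Quot.mk _ ⟨a, ha⟩, rfl⟩

theorem numComponents_insert_of_reach (h : reach ends S (ends e).1 (ends e).2) :
    numComponents ends W (insert e S) = numComponents ends W S :=
  numComponents_eq_of_reach_iff id (Set.mapsTo_id W) (Set.surjOn_id W) fun _ _ _ _ =>
    ⟨reach_of_reach_insert h, fun h' => h'.mono (Set.subset_insert e S)⟩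

variable [Finite V]

theorem numComponents_le_numComponents_insert_add_one (he : e ∈ edgesIn ends W) :
    numComponents ends W S ≤ numComponents ends W (insert e S) + 1 := by
  classical
  let y : Component ends W S := Quot.mk _ ⟨(ends e).2, he.2⟩
  let u : Component ends W S → Component ends W (insert e S) :=
    Quot.map id fun _ _ h => h.mono (Set.subset_insert e S)
  -- Adding `e` can only merge the class `y` of `(ends e).2` with another class.
  let F : Component ends W S → Option (Component ends W (insert e S)) :=
    fun q => if q = y then none else some (u q)
  have hF : F.Injective := by
    rintro ⟨a⟩ ⟨b⟩ hab
    by_cases ha : Quot.mk _ a = y <;> by_cases hb : Quot.mk _ b = y <;>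
      simp only [F, ha, hb, if_true, if_false, reduceCtorEq, Option.some.injEq] at hab
    · exact ha.trans hb.symm
    · rcases reach_insert_cases (Component.mk_eq_iff.mp hab) with h | ⟨-, h⟩ | ⟨h, -⟩
      · exact Component.mk_eq_iff.mpr h
      · exact absurd (Component.mk_eq_iff.mpr h.symm) hb
      · exact absurd (Component.mk_eq_iff.mpr h) ha
  calc numComponents ends W S ≤ Nat.card (Option (Component ends W (insert e S))) :=
        Nat.card_le_card_of_injective F hF
    _ = numComponents ends W (insert e S) + 1 := Finite.card_option

theorem numComponents_insert_lt (he : e ∈ edgesIn ends W)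
    (hbr : ¬ reach ends S (ends e).1 (ends e).2) :
    numComponents ends W (insert e S) < numComponents ends W S := by
  have := Fintype.ofFinite (Component ends W S)
  have := Fintype.ofFinite (Component ends W (insert e S))
  let u : Component ends W S → Component ends W (insert e S) :=
    Quot.map id fun _ _ h => h.mono (Set.subset_insert e S)
  have hu : u.Surjective := by
    rintro ⟨a⟩
    exact ⟨Quot.mk _ a, rfl⟩
  have hu' : ¬ u.Injective := fun hinj => hbr <| Component.mk_eq_iff.mp
    (@hinj (Quot.mk _ ⟨_, he.1⟩) (Quot.mk _ ⟨_, he.2⟩)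
      (Component.mk_eq_iff.mpr (reach_ends (Set.mem_insert e S))))
  rw [numComponents_eq_card, numComponents_eq_card, Nat.card_eq_fintype_card,
    Nat.card_eq_fintype_card]
  exact Fintype.card_lt_of_surjective_not_injective u hu hu'

theorem ncard_le_numComponents_add_ncard [Finite E] (hS : S ⊆ edgesIn ends W) :
    W.ncard ≤ numComponents ends W S + S.ncard := by
  induction S, Set.toFinite S using Set.Finite.induction_on with
  | empty => simp [numComponents_empty]
  | @insert e s he _ ih =>
    have hins := numComponents_le_numComponents_insert_add_one (S := s) (hS (Set.mem_insert e s))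
    rw [Set.ncard_insert_of_notMem he]
    have := ih ((Set.subset_insert e s).trans hS)
    omega

theorem numComponents_add_ncard_le [Finite E] (hS : S ⊆ edgesIn ends W)
    (hbr : ∀ e ∈ S, IsBridge ends e) :
    numComponents ends W S + S.ncard ≤ W.ncard := by
  induction S, Set.toFinite S using Set.Finite.induction_on with
  | empty => simp [numComponents_empty]
  | @insert e s he _ ih =>
    have hlt := numComponents_insert_lt (hS (Set.mem_insert e s))
      fun h => hbr e (Set.mem_insert e s) (h.mono fun f hf hfe => he (hfe ▸ hf))
    rw [Set.ncard_insert_of_notMem he]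
    have := ih ((Set.subset_insert e s).trans hS) fun f hf => hbr f (Set.mem_insert_of_mem e hf)
    omega

end Components

section CrossEdges

variable {V E : Type} {ends : E → V × V} {S : Set E} {W : Set V} {a b : V} {e : E}

-- `outerEnd` and `innerEnd` are meaningful only for `e ∈ crossEdges ends W Wᶜ`.
open Classical in
noncomputable def outerEnd (ends : E → V × V) (W : Set V) (e : E) : V :=
  if (ends e).1 ∈ W then (ends e).2 else (ends e).1

open Classical in
noncomputable def innerEnd (ends : E → V × V) (W : Set V) (e : E) : V :=
  if (ends e).1 ∈ W then (ends e).1 else (ends e).2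

theorem mem_edgesIn_of_ends (h : ends e = (a, b) ∨ ends e = (b, a)) (ha : a ∈ W) (hb : b ∈ W) :
    e ∈ edgesIn ends W := by
  rcases h with h | h <;> simp [edgesIn, h, ha, hb]

theorem mem_crossEdges_of_ends (h : ends e = (a, b) ∨ ends e = (b, a)) (ha : a ∈ W)
    (hb : b ∉ W) :
    e ∈ crossEdges ends W Wᶜ ∧ innerEnd ends W e = a ∧ outerEnd ends W e = b := by
  rcases h with h | h <;> simp [crossEdges, innerEnd, outerEnd, h, ha, hb]

theorem ends_of_mem_crossEdges (he : e ∈ crossEdges ends W Wᶜ) :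
    innerEnd ends W e ∈ W ∧ outerEnd ends W e ∉ W ∧
      (ends e = (innerEnd ends W e, outerEnd ends W e) ∨
        ends e = (outerEnd ends W e, innerEnd ends W e)) := by
  rcases he with ⟨h1, h2⟩ | ⟨h1, h2⟩
  · simp_all [innerEnd, outerEnd]
  · have h1' : (ends e).1 ∉ W := h1
    simp_all [innerEnd, outerEnd]

theorem notMem_edgesIn_of_mem_crossEdges (he : e ∈ crossEdges ends W Wᶜ) :
    e ∉ edgesIn ends W ∧ e ∉ edgesIn ends Wᶜ := by
  rcases he with ⟨h1, h2⟩ | ⟨h1, h2⟩ <;> simp_all [edgesIn]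

theorem mem_edgesIn_or_mem_crossEdges (he : (ends e).1 ∈ W ∨ (ends e).2 ∈ W) :
    e ∈ edgesIn ends W ∨ e ∈ crossEdges ends W Wᶜ := by
  by_cases h1 : (ends e).1 ∈ W <;> by_cases h2 : (ends e).2 ∈ W <;>
    simp_all [edgesIn, crossEdges]

theorem exists_crossEdges_reach (hb : b ∈ W) (ha : a ∉ W) (h : reach ends S a b) :
    ∃ e ∈ S ∩ crossEdges ends W Wᶜ, reach ends (S ∩ edgesIn ends Wᶜ) a (outerEnd ends W e) := by
  induction h using Relation.ReflTransGen.head_induction_on with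
  | refl => exact absurd hb ha
  | @head p q hpq _ ih =>
    obtain ⟨e, heS, hends⟩ := hpq
    by_cases hq : q ∈ W
    · obtain ⟨hcross, -, hout⟩ := mem_crossEdges_of_ends (Or.symm hends) hq ha
      exact ⟨e, ⟨heS, hcross⟩, hout ▸ reach.refl⟩
    · obtain ⟨f, hf, hreach⟩ := ih hq
      exact ⟨f, hf, (reach.single (S := S ∩ edgesIn ends Wᶜ)
        ⟨e, ⟨heS, mem_edgesIn_of_ends hends ha hq⟩, hends⟩).trans hreach⟩

def CrossEdgesSeparated (ends : E → V × V) (W : Set V) : Prop :=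
  ∀ e ∈ crossEdges ends W Wᶜ, ∀ f ∈ crossEdges ends W Wᶜ,
    reach ends (edgesIn ends Wᶜ) (outerEnd ends W e) (outerEnd ends W f) → e = f

theorem CrossEdgesSeparated.isBridge (hsep : CrossEdgesSeparated ends W)
    (he : e ∈ crossEdges ends W Wᶜ) : IsBridge ends e := by
  intro h
  obtain ⟨hin, hout, hends⟩ := ends_of_mem_crossEdges he
  have h' : reach ends {e}ᶜ (outerEnd ends W e) (innerEnd ends W e) := by
    rcases hends with hends | hends <;> rw [hends] at h
    exacts [h.symm, h]
  obtain ⟨f, ⟨hfe, hf⟩, hreach⟩ := exists_crossEdges_reach hin hout h'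
  exact hfe (hsep e he f hf (hreach.mono Set.inter_subset_right)).symm

variable (hconn : ∀ a b : V, reach ends Set.univ a b) (hW : W.Nonempty)
include hconn hW

/-- In a connected graph every component of `Wᶜ` is entered by an edge from `W`, so the
components are counted by the crossing edges exactly when those are separated. -/
theorem numComponents_compl_eq_ncard_iff [Finite V] [Finite E] :
    numComponents ends Wᶜ (edgesIn ends Wᶜ) = (crossEdges ends W Wᶜ).ncard ↔
      CrossEdgesSeparated ends W := by
  let β : crossEdges ends W Wᶜ → Component ends Wᶜ (edgesIn ends Wᶜ) :=
    fun e => Quot.mk _ ⟨outerEnd ends W e, (ends_of_mem_crossEdges e.2).2.1⟩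
  have hβ : β.Surjective := by
    rintro ⟨⟨a, ha⟩⟩
    obtain ⟨b, hb⟩ := hW
    obtain ⟨e, ⟨-, he⟩, h⟩ := exists_crossEdges_reach hb ha (hconn a b)
    exact ⟨⟨e, he⟩, Component.mk_eq_iff.mpr (h.mono Set.inter_subset_right).symm⟩
  have hcard : numComponents ends Wᶜ (edgesIn ends Wᶜ) = (crossEdges ends W Wᶜ).ncard ↔
      β.Injective := by
    rw [numComponents_eq_card, ← Nat.card_coe_set_eq, eq_comm]
    exact ⟨fun h => ((Nat.bijective_iff_surjective_and_card β).mpr ⟨hβ, h⟩).1,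
      fun h => Nat.card_eq_of_bijective β ⟨h, hβ⟩⟩
  rw [hcard]
  exact ⟨fun hinj e he f hf h => congrArg Subtype.val (@hinj ⟨e, he⟩ ⟨f, hf⟩
    (Component.mk_eq_iff.mpr h)), fun hsep e f h => Subtype.ext (hsep e e.2 f f.2
    (Component.mk_eq_iff.mp h))⟩

/-- Collapsing every component of `Wᶜ` onto the inner end of its unique crossing edge
retracts paths of the graph onto paths inside `W`. -/
theorem exists_retraction (hsep : CrossEdgesSeparated ends W) :
    ∃ π : V → V, (∀ p ∈ W, π p = p) ∧
      ∀ {S : Set E} {a b : V}, reach ends S a b → reach ends (edgesIn ends W ∩ S) (π a) (π b) := by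
  classical
  have hexit : ∀ p ∉ W, ∃ e ∈ crossEdges ends W Wᶜ,
      reach ends (edgesIn ends Wᶜ) (outerEnd ends W e) p := by
    intro p hp
    obtain ⟨b, hb⟩ := hW
    obtain ⟨e, ⟨-, he⟩, h⟩ := exists_crossEdges_reach hb hp (hconn p b)
    exact ⟨e, he, (h.mono Set.inter_subset_right).symm⟩
  choose g hg hreach using hexit
  have hg_eq : ∀ p (hp : p ∉ W), ∀ e ∈ crossEdges ends W Wᶜ,
      reach ends (edgesIn ends Wᶜ) (outerEnd ends W e) p → g p hp = e :=
    fun p hp e he h => hsep _ (hg p hp) _ he ((hreach p hp).trans h.symm)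
  refine ⟨fun p => if hp : p ∈ W then p else innerEnd ends W (g p hp), fun p hp => dif_pos hp,
    fun h => ?_⟩
  induction h with
  | refl => exact reach.refl
  | @tail p q _ hstep ih =>
    refine ih.trans ?_
    obtain ⟨e, heS, hends⟩ := hstep
    by_cases hp : p ∈ W <;> by_cases hq : q ∈ W <;>
      simp only [hp, hq, dif_pos, dif_neg, not_false_eq_true]
    · exact reach.single ⟨e, ⟨mem_edgesIn_of_ends hends hp hq, heS⟩, hends⟩
    · obtain ⟨he, hin, hout⟩ := mem_crossEdges_of_ends hends hp hq
      rw [hg_eq q hq e he (hout ▸ reach.refl), hin]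
      exact reach.refl
    · obtain ⟨he, hin, hout⟩ := mem_crossEdges_of_ends (Or.symm hends) hq hp
      rw [hg_eq p hp e he (hout ▸ reach.refl), hin]
      exact reach.refl
    · rw [hg_eq q hq (g p hp) (hg p hp)
        ((hreach p hp).trans (reach.single ⟨e, mem_edgesIn_of_ends hends hp hq, hends⟩))]
      exact reach.refl

end CrossEdges

section Bridges

variable {V E : Type} [Finite V] [Finite E] {ends : E → V × V} {W : Set V} {e : E}

theorem not_reach_diff_singleton_of_tree (hc : numComponents ends W (edgesIn ends W) = 1)
    (hcard : (edgesIn ends W).ncard + 1 = W.ncard) (he : e ∈ edgesIn ends W) :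
    ¬ reach ends (edgesIn ends W \ {e}) (ends e).1 (ends e).2 := by
  intro h
  have hc' := numComponents_insert_of_reach (W := W) h
  rw [Set.insert_sdiff_singleton, Set.insert_eq_of_mem he, hc] at hc'
  have hle := ncard_le_numComponents_add_ncard (S := edgesIn ends W \ {e}) Set.sdiff_subset
  have hpos : 0 < (edgesIn ends W).ncard := (Set.ncard_pos (Set.toFinite _)).mpr ⟨e, he⟩
  rw [← hc', Set.ncard_sdiff_singleton_of_mem he] at hle
  omega

theorem tree_and_separated_of_isBridge (hc : numComponents ends W (edgesIn ends W) = 1)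
    (hbr : ∀ e, (ends e).1 ∈ W ∨ (ends e).2 ∈ W → IsBridge ends e) :
    (edgesIn ends W).ncard + 1 = W.ncard ∧ CrossEdgesSeparated ends W := by
  refine ⟨?_, fun e he f hf h => by_contra fun hef => ?_⟩
  · have hle := numComponents_add_ncard_le subset_rfl fun e he => hbr e (Or.inl he.1)
    have hge := ncard_le_numComponents_add_ncard (subset_refl (edgesIn ends W))
    omega
  · obtain ⟨hin_e, -, hends⟩ := ends_of_mem_crossEdges he
    obtain ⟨hin_f, -, hends_f⟩ := ends_of_mem_crossEdges hf
    have hinside : reach ends {e}ᶜ (innerEnd ends W e) (innerEnd ends W f) :=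
      ((numComponents_eq_one_iff.mp hc).2 ⟨_, hin_e⟩ ⟨_, hin_f⟩).mono
        fun g hg hge => (notMem_edgesIn_of_mem_crossEdges he).1 (hge ▸ hg)
    have hacross : reach ends {e}ᶜ (innerEnd ends W f) (outerEnd ends W f) :=
      reach.single ⟨f, Ne.symm hef, hends_f⟩
    have houtside : reach ends {e}ᶜ (outerEnd ends W f) (outerEnd ends W e) :=
      h.symm.mono fun g hg hge => (notMem_edgesIn_of_mem_crossEdges he).2 (hge ▸ hg)
    have hcycle := hinside.trans (hacross.trans houtside)
    apply hbr e (Or.symm (by rcases hends with h | h <;> simp [h, hin_e]))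
    rcases hends with h | h <;> rw [h]
    exacts [hcycle, hcycle.symm]

variable (hconn : ∀ a b : V, reach ends Set.univ a b)
include hconn

theorem isBridge_of_tree_of_separated (hc : numComponents ends W (edgesIn ends W) = 1)
    (hcard : (edgesIn ends W).ncard + 1 = W.ncard) (hsep : CrossEdgesSeparated ends W)
    (he : (ends e).1 ∈ W ∨ (ends e).2 ∈ W) : IsBridge ends e := by
  rcases mem_edgesIn_or_mem_crossEdges he with he | he
  · intro h
    obtain ⟨π, hπW, hπ⟩ := exists_retraction hconn ⟨_, he.1⟩ hsep
    have h' := hπ h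
    rw [hπW _ he.1, hπW _ he.2] at h'
    exact not_reach_diff_singleton_of_tree hc hcard he h'
  · exact hsep.isBridge he

theorem tree_and_numComponents_compl_iff (hW : W.Nonempty)
    (hc : numComponents ends W (edgesIn ends W) = 1) :
    ((edgesIn ends W).ncard + 1 = W.ncard ∧
      numComponents ends Wᶜ (edgesIn ends Wᶜ) = (crossEdges ends W Wᶜ).ncard) ↔
      ∀ e, (ends e).1 ∈ W ∨ (ends e).2 ∈ W → IsBridge ends e := by
  rw [numComponents_compl_eq_ncard_iff hconn hW]
  exact ⟨fun ⟨hcard, hsep⟩ _ => isBridge_of_tree_of_separated hconn hc hcard hsep,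
    tree_and_separated_of_isBridge hc⟩

end Bridges

section StableGraph

variable {n : ℕ} {Γ : StableGraph n} {W : Set Γ.V} {v : Γ.V}

theorem isSepRatMultibridge_iff :
    IsSepRatMultibridge Γ W ↔ W.Nonempty ∧ W ≠ Set.univ ∧ (∀ w ∈ W, Γ.genus w = 0) ∧
      (∀ i, Γ.leg i ∉ W) ∧ numComponents Γ.ends W (edgesIn Γ.ends W) = 1 ∧
      ∀ e, (Γ.ends e).1 ∈ W ∨ (Γ.ends e).2 ∈ W → IsBridge Γ.ends e := by
  constructor
  · rintro ⟨hne, hu, hg, hl, hc, hcard, hcomp⟩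
    exact ⟨hne, hu, hg, hl, hc,
      (tree_and_numComponents_compl_iff Γ.conn hne hc).mp ⟨hcard, hcomp⟩⟩
  · rintro ⟨hne, hu, hg, hl, hc, hbr⟩
    obtain ⟨hcard, hcomp⟩ := (tree_and_numComponents_compl_iff Γ.conn hne hc).mpr hbr
    exact ⟨hne, hu, hg, hl, hc, hcard, hcomp⟩

theorem IsSepRatMultibridge.isBridge (h : IsSepRatMultibridge Γ W) {e : Γ.E}
    (he : (Γ.ends e).1 ∈ W ∨ (Γ.ends e).2 ∈ W) : IsBridge Γ.ends e :=
  (isSepRatMultibridge_iff.mp h).2.2.2.2.2 e he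

theorem isSepRatMultibridge_of_subset_sepAssignment (hne : W.Nonempty) (hu : W ≠ Set.univ)
    (hc : numComponents Γ.ends W (edgesIn Γ.ends W) = 1) (h : W ⊆ sepAssignment n Γ) :
    IsSepRatMultibridge Γ W := by
  refine isSepRatMultibridge_iff.mpr ⟨hne, hu, fun w hw => ?_, fun i hi => ?_, hc, fun e he => ?_⟩
  · obtain ⟨W', ⟨-, -, hg, -⟩, hw'⟩ := h hw
    exact hg w hw'
  · obtain ⟨W', ⟨-, -, -, hl, -⟩, hi'⟩ := h hi
    exact hl i hi'
  · rcases he with he | he <;> obtain ⟨W', hW', hw'⟩ := h he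
    exacts [hW'.isBridge (Or.inl hw'), hW'.isBridge (Or.inr hw')]

theorem mem_sepAssignment_iff : v ∈ sepAssignment n Γ ↔ IsSepRatMultibridge Γ {v} := by
  refine ⟨fun ⟨W, hW, hv⟩ => ?_, fun h => ⟨{v}, h, rfl⟩⟩
  have hsub : {v} ⊆ W := Set.singleton_subset_iff.mpr hv
  exact isSepRatMultibridge_of_subset_sepAssignment ⟨v, rfl⟩
    (fun h => hW.2.1 (Set.eq_univ_of_univ_subset (h ▸ hsub))) (numComponents_singleton v _)
    (Set.singleton_subset_iff.mpr ⟨W, hW, hv⟩)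

theorem sepAssignment_ne_univ {g : ℤ} (hgn : 2 < 2 * g + n) (hΓ : totalGenus Γ = g) :
    sepAssignment n Γ ≠ Set.univ := by
  intro huniv
  have hall : ∀ v, IsSepRatMultibridge Γ {v} := fun v =>
    mem_sepAssignment_iff.mp (huniv ▸ Set.mem_univ v)
  have hn : n = 0 := by
    by_contra hn
    obtain ⟨-, -, -, hl, -⟩ := hall (Γ.leg ⟨0, by omega⟩)
    exact hl _ rfl
  have hforest := numComponents_add_ncard_le (W := Set.univ) (S := Set.univ)
    (fun _ _ => ⟨trivial, trivial⟩) fun e _ => (hall (Γ.ends e).1).isBridge (Or.inl rfl)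
  have hgenus : ∑ v, (Γ.genus v : ℤ) = 0 := Finset.sum_eq_zero fun v _ => by
    obtain ⟨-, -, hg, -⟩ := hall v
    simp [hg v rfl]
  rw [Set.ncard_univ, Set.ncard_univ] at hforest
  rw [totalGenus, hgenus] at hΓ
  subst hn
  omega

end StableGraph

namespace Degeneration

variable {n : ℕ} {Γ₀ Γ₁ : StableGraph n} (D : Degeneration Γ₀ Γ₁)

def contractedEdges (v : Γ₀.V) : Set Γ₁.E :=
  {e | e ∉ Set.range D.ψ ∧ (Γ₁.ends e).1 ∈ D.φ ⁻¹' {v}}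

theorem numComponents_contractedEdges (v : Γ₀.V) :
    numComponents Γ₁.ends (D.φ ⁻¹' {v}) (D.contractedEdges v) = 1 :=
  D.fiber_conn v

theorem surjective : D.φ.Surjective := fun v =>
  (numComponents_eq_one_iff.mp (D.numComponents_contractedEdges v)).1

theorem contractedEdges_subset (v : Γ₀.V) :
    D.contractedEdges v ⊆ edgesIn Γ₁.ends (D.φ ⁻¹' {v}) := fun e ⟨he, h1⟩ =>
  ⟨h1, (D.contracted e he).symm.trans h1⟩

theorem reach_fiber {U : Set Γ₀.V} {u : Γ₀.V} (hu : u ∈ U) {a b : Γ₁.V} (ha : D.φ a = u)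
    (hb : D.φ b = u) : reach Γ₁.ends (edgesIn Γ₁.ends (D.φ ⁻¹' U)) a b :=
  ((numComponents_eq_one_iff.mp (D.numComponents_contractedEdges u)).2 ⟨a, ha⟩ ⟨b, hb⟩).mono
    fun e he => by
    obtain ⟨h1, h2⟩ := D.contractedEdges_subset u he
    simp only [Set.mem_preimage, Set.mem_singleton_iff] at h1 h2
    exact ⟨by simp [h1, hu], by simp [h2, hu]⟩

theorem ends_of_ends_ψ {e : Γ₀.E} {p q : Γ₁.V}
    (h : Γ₁.ends (D.ψ e) = (p, q) ∨ Γ₁.ends (D.ψ e) = (q, p)) :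
    Γ₀.ends e = (D.φ p, D.φ q) ∨ Γ₀.ends e = (D.φ q, D.φ p) := by
  rcases h with h | h <;> rcases D.ends_comm e with h' | h' <;> rw [h] at h' <;> simp [← h']

theorem exists_ends_ψ {e : Γ₀.E} {u u' : Γ₀.V}
    (h : Γ₀.ends e = (u, u') ∨ Γ₀.ends e = (u', u)) :
    ∃ p q, (Γ₁.ends (D.ψ e) = (p, q) ∨ Γ₁.ends (D.ψ e) = (q, p)) ∧ D.φ p = u ∧ D.φ q = u' := by
  rcases h with h | h <;> rcases D.ends_comm e with h' | h' <;> rw [h, Prod.mk.injEq] at h'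
  exacts [⟨_, _, Or.inl rfl, h'⟩, ⟨_, _, Or.inr rfl, h'⟩, ⟨_, _, Or.inr rfl, h'.symm⟩,
    ⟨_, _, Or.inl rfl, h'.symm⟩]

theorem mem_edgesIn_preimage_iff (U : Set Γ₀.V) (e : Γ₀.E) :
    D.ψ e ∈ edgesIn Γ₁.ends (D.φ ⁻¹' U) ↔ e ∈ edgesIn Γ₀.ends U := by
  rcases D.ends_comm e with h | h <;> simp [edgesIn, ← h, and_comm]

theorem mem_crossEdges_preimage_iff (U T : Set Γ₀.V) (e : Γ₀.E) :
    D.ψ e ∈ crossEdges Γ₁.ends (D.φ ⁻¹' U) (D.φ ⁻¹' T) ↔ e ∈ crossEdges Γ₀.ends U T := by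
  rcases D.ends_comm e with h | h
  · simp only [crossEdges, Set.mem_ofPred_eq, Set.mem_preimage, ← h]
  · simp only [crossEdges, Set.mem_ofPred_eq, Set.mem_preimage, ← h]
    tauto

theorem image_crossEdges (U : Set Γ₀.V) :
    D.ψ '' crossEdges Γ₀.ends U Uᶜ = crossEdges Γ₁.ends (D.φ ⁻¹' U) (D.φ ⁻¹' U)ᶜ := by
  ext f
  refine ⟨fun ⟨e, he, hf⟩ => hf ▸ (D.mem_crossEdges_preimage_iff U Uᶜ e).mpr he, fun hf => ?_⟩
  by_cases hψ : f ∈ Set.range D.ψ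
  · obtain ⟨e, rfl⟩ := hψ
    exact ⟨e, (D.mem_crossEdges_preimage_iff U Uᶜ e).mp hf, rfl⟩
  · have := D.contracted f hψ
    rcases hf with ⟨h1, h2⟩ | ⟨h1, h2⟩ <;> simp_all

theorem ncard_crossEdges_preimage (U : Set Γ₀.V) :
    (crossEdges Γ₁.ends (D.φ ⁻¹' U) (D.φ ⁻¹' U)ᶜ).ncard = (crossEdges Γ₀.ends U Uᶜ).ncard := by
  rw [← image_crossEdges, Set.ncard_image_of_injective _ D.ψinj]

theorem reach_map {U : Set Γ₀.V} {a b : Γ₁.V}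
    (h : reach Γ₁.ends (edgesIn Γ₁.ends (D.φ ⁻¹' U)) a b) :
    reach Γ₀.ends (edgesIn Γ₀.ends U) (D.φ a) (D.φ b) := by
  induction h with
  | refl => exact reach.refl
  | @tail p q _ hstep ih =>
    obtain ⟨f, hf, hends⟩ := hstep
    by_cases hψ : f ∈ Set.range D.ψ
    · obtain ⟨e, rfl⟩ := hψ
      exact ih.trans (reach.single ⟨e, (D.mem_edgesIn_preimage_iff U e).mp hf,
        D.ends_of_ends_ψ hends⟩)
    · have hpq := D.contracted f hψ
      rcases hends with h | h <;> rw [h] at hpq <;> simpa [hpq] using ih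

theorem reach_lift {U : Set Γ₀.V} {u u' : Γ₀.V} (h : reach Γ₀.ends (edgesIn Γ₀.ends U) u u')
    (hu : u ∈ U) {a b : Γ₁.V} (ha : D.φ a = u) (hb : D.φ b = u') :
    reach Γ₁.ends (edgesIn Γ₁.ends (D.φ ⁻¹' U)) a b := by
  induction h generalizing b with
  | refl => exact D.reach_fiber hu ha hb
  | @tail z z' _ hstep ih =>
    obtain ⟨e, he, hends⟩ := hstep
    obtain ⟨p, q, hpq, hp, hq⟩ := D.exists_ends_ψ hends
    have hψ := (D.mem_edgesIn_preimage_iff U e).mpr he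
    have hz' : z' ∈ U := by rcases hends with h | h <;> simp [edgesIn, h] at he <;> simp [he]
    exact (ih hp).trans ((reach.single ⟨_, hψ, hpq⟩).trans (D.reach_fiber hz' hq hb))

theorem numComponents_preimage (U : Set Γ₀.V) :
    numComponents Γ₁.ends (D.φ ⁻¹' U) (edgesIn Γ₁.ends (D.φ ⁻¹' U)) =
      numComponents Γ₀.ends U (edgesIn Γ₀.ends U) :=
  (numComponents_eq_of_reach_iff D.φ (fun _ ha => ha)
    (fun u hu => (D.surjective u).imp fun _ ha => ⟨Set.mem_preimage.mpr (ha ▸ hu), ha⟩)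
    fun _ ha _ _ => ⟨fun h => D.reach_lift h ha rfl rfl, D.reach_map⟩).symm

theorem ncard_edgesIn_fiber (v : Γ₀.V) :
    (edgesIn Γ₁.ends (D.φ ⁻¹' {v})).ncard =
      (D.contractedEdges v).ncard + (edgesIn Γ₀.ends {v}).ncard := by
  have hsplit : edgesIn Γ₁.ends (D.φ ⁻¹' {v}) =
      D.contractedEdges v ∪ D.ψ '' edgesIn Γ₀.ends {v} := by
    ext f
    by_cases hψ : f ∈ Set.range D.ψ
    · obtain ⟨e, rfl⟩ := hψ
      simp [contractedEdges, D.ψinj.mem_set_image, D.mem_edgesIn_preimage_iff]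
    · have hf := D.contracted f hψ
      simp only [edgesIn, contractedEdges, Set.mem_union, Set.mem_ofPred_eq, Set.mem_preimage,
        Set.mem_image, hψ, not_false_eq_true, true_and, hf, and_self]
      exact (or_iff_left fun ⟨e, _, he⟩ => hψ ⟨e, he⟩).symm
  rw [hsplit, Set.ncard_union_eq (Set.disjoint_left.mpr
    fun _ hf hf' => hf.1 (Set.image_subset_range _ _ hf')),
    Set.ncard_image_of_injective _ D.ψinj]

/-- `genus_eq` reads `g(v) = Σ_{w ∈ M_v} g(w) + b₁(M_v)`, where `b₁(M_v) ≥ 0` because `M_v` is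
connected through the contracted edges. -/
theorem rational_tree_singleton_iff_preimage (v : Γ₀.V) :
    (Γ₀.genus v = 0 ∧ (edgesIn Γ₀.ends {v}).ncard + 1 = ({v} : Set Γ₀.V).ncard) ↔
      ((∀ w ∈ D.φ ⁻¹' {v}, Γ₁.genus w = 0) ∧
        (edgesIn Γ₁.ends (D.φ ⁻¹' {v})).ncard + 1 = (D.φ ⁻¹' {v}).ncard) := by
  set sumGenus := ∑ w, (D.φ ⁻¹' {v}).indicator (fun w => (Γ₁.genus w : ℤ)) w
  have hgenus : (Γ₀.genus v : ℤ) =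
      sumGenus + (D.contractedEdges v).ncard - (D.φ ⁻¹' {v}).ncard + 1 := D.genus_eq v
  have hsum_nonneg : 0 ≤ sumGenus :=
    Finset.sum_nonneg fun w _ => Set.indicator_nonneg (fun _ _ => by omega) w
  have hsum_eq_zero : sumGenus = 0 ↔ ∀ w ∈ D.φ ⁻¹' {v}, Γ₁.genus w = 0 := by
    rw [Finset.sum_eq_zero_iff_of_nonneg fun w _ => Set.indicator_nonneg (fun _ _ => by omega) w]
    simp [Set.indicator_apply_eq_zero]
  have hedges := D.ncard_edgesIn_fiber v
  have hconn := ncard_le_numComponents_add_ncard (D.contractedEdges_subset v)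
  rw [D.numComponents_contractedEdges v] at hconn
  rw [Set.ncard_singleton, ← hsum_eq_zero]
  omega

theorem isSepRatMultibridge_preimage_singleton_iff (v : Γ₀.V) :
    IsSepRatMultibridge Γ₀ {v} ↔ IsSepRatMultibridge Γ₁ (D.φ ⁻¹' {v}) := by
  have hne : (D.φ ⁻¹' {v}).Nonempty := D.surjective v
  have hproper : D.φ ⁻¹' {v} ≠ Set.univ ↔ {v} ≠ Set.univ := by
    rw [← Set.preimage_univ (f := D.φ), (Set.preimage_injective.mpr D.surjective).ne_iff]
  have hlegs : (∀ i, Γ₁.leg i ∉ D.φ ⁻¹' {v}) ↔ ∀ i, Γ₀.leg i ∉ ({v} : Set Γ₀.V) := by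
    simp [D.leg_comm]
  have hconn := D.numComponents_preimage {v}
  have hcompl : numComponents Γ₁.ends (D.φ ⁻¹' {v})ᶜ (edgesIn Γ₁.ends (D.φ ⁻¹' {v})ᶜ) =
      numComponents Γ₀.ends {v}ᶜ (edgesIn Γ₀.ends {v}ᶜ) := D.numComponents_preimage {v}ᶜ
  have htree := D.rational_tree_singleton_iff_preimage v
  simp only [IsSepRatMultibridge, hconn, hcompl, D.ncard_crossEdges_preimage, hproper, hlegs,
    hne, Set.singleton_nonempty, Set.mem_singleton_iff, forall_eq, numComponents_singleton]
  tauto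

end Degeneration

def GraphIso.toDegeneration {n : ℕ} {Γ Γ' : StableGraph n} (σ : GraphIso Γ Γ') :
    Degeneration Γ' Γ where
  φ := σ.vEquiv
  ψ := σ.eEquiv.symm
  ψinj := σ.eEquiv.symm.injective
  ends_comm e := by
    rcases σ.ends_comm (σ.eEquiv.symm e) with h | h <;> rw [Equiv.apply_symm_apply] at h
    exacts [Or.inl h.symm, Or.inr h.symm]
  contracted e he := absurd (σ.eEquiv.symm.surjective e) he
  fiber_conn v := numComponents_eq_one_iff.mpr ⟨σ.vEquiv.surjective v,
    fun ⟨_, ha⟩ ⟨_, hb⟩ => σ.vEquiv.injective (ha.trans hb.symm) ▸ reach.refl⟩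
  genus_eq v := by
    classical
    have hfiber : σ.vEquiv ⁻¹' {v} = {σ.vEquiv.symm v} := by
      ext
      simp [Equiv.eq_symm_apply]
    simp [hfiber, ← σ.genus_comm (σ.vEquiv.symm v)]
  leg_comm := σ.leg_comm

theorem GraphIso.mem_sepAssignment_iff {n : ℕ} {Γ Γ' : StableGraph n} (σ : GraphIso Γ Γ')
    (v : Γ.V) : σ.vEquiv v ∈ sepAssignment n Γ' ↔ v ∈ sepAssignment n Γ := by
  have hfiber : σ.vEquiv ⁻¹' {σ.vEquiv v} = {v} := by
    ext
    simp
  rw [Stmt12.mem_sepAssignment_iff, Stmt12.mem_sepAssignment_iff,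
    σ.toDegeneration.isSepRatMultibridge_preimage_singleton_iff]
  exact hfiber ▸ Iff.rfl

theorem mem_sepAssignment_iff_preimage_subset {n : ℕ} {g : ℤ} (hgn : 2 < 2 * g + n)
    {Γ₀ Γ₁ : StableGraph n} (h₁ : totalGenus Γ₁ = g) (D : Degeneration Γ₀ Γ₁) (v : Γ₀.V) :
    v ∈ sepAssignment n Γ₀ ↔ D.φ ⁻¹' {v} ⊆ sepAssignment n Γ₁ := by
  rw [mem_sepAssignment_iff, D.isSepRatMultibridge_preimage_singleton_iff]
  refine ⟨fun h w hw => ⟨_, h, hw⟩, fun h =>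
    isSepRatMultibridge_of_subset_sepAssignment (D.surjective v) (fun hu => ?_) ?_ h⟩
  · exact sepAssignment_ne_univ hgn h₁ (Set.eq_univ_of_univ_subset (hu ▸ h))
  · rw [D.numComponents_preimage, numComponents_singleton]

end Stmt12

open Stmt12 in
theorem stmt_12 (g : ℤ) (n : ℕ) (hgn : 2 < 2 * g + n) :
    -- the degeneration of a single separating rational `m`-bridge vertex is a
    -- separating rational `m`-bridge, and conversely
    (∀ (Γ₀ Γ₁ : StableGraph n), totalGenus Γ₀ = g → totalGenus Γ₁ = g →
      ∀ (D : Degeneration Γ₀ Γ₁) (v : Γ₀.V),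
        (IsSepRatMultibridge Γ₀ {v} ↔ IsSepRatMultibridge Γ₁ (D.φ ⁻¹' {v})) ∧
        (IsSepRatMultibridge Γ₀ {v} →
          (crossEdges Γ₀.ends {v} ({v}ᶜ)).ncard =
            (crossEdges Γ₁.ends (D.φ ⁻¹' {v}) ((D.φ ⁻¹' {v})ᶜ)).ncard)) ∧
    -- hence the separating rational multibridge assignment is extremal
    IsExtremalAssignment g n (sepAssignment n) :=
  ⟨fun _ _ _ _ D v => ⟨D.isSepRatMultibridge_preimage_singleton_iff v,
      fun _ => (D.ncard_crossEdges_preimage {v}).symm⟩,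
    fun _ hΓ => sepAssignment_ne_univ hgn hΓ,
    fun _ _ σ v => (σ.mem_sepAssignment_iff v).symm,
    fun _ _ _ h₁ D v => mem_sepAssignment_iff_preimage_subset hgn h₁ D v⟩
end

section
/- Let Γ be a connected graph, Z a connected genus-0 subgraph, and H a connected component of the complement of Z meeting Z along m₀ ≥ 4 edges. Suppose Z' is a connected genus-0 subgraph of Γ containing Z but not containing H. If H₁,...,H_l are the connected components of H \ Z' and e_i is the number of edges connecting H_i to (Z ∪ H) \ H_i, then Σ_{i=1}^l (e_i − 1) ≥ m₀ − 1 ≥ 3; consequently either some e_i ≥ 4 or there exist two distinct indices i ≠ j with e_i ≥ 2 and e_j ≥ 2. -/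
/-!
STATEMENT 13: Let `Γ` be a connected multigraph, `Z` a connected genus-0 subgraph, and
`H` a connected component of the complement of `Z` meeting `Z` along `m₀ ≥ 4` edges.
Suppose `Z'` is a connected genus-0 subgraph of `Γ` containing `Z` but not containing
`H`.  If `H₁,…,H_l` are the connected components of `H \ Z'` and `e_i` is the number of
edges connecting `H_i` to `(Z ∪ H) \ H_i`, then `Σ (e_i − 1) ≥ m₀ − 1 ≥ 3`;
consequently either some `e_i ≥ 4` or there are two distinct indices `i ≠ j` with
`e_i ≥ 2` and `e_j ≥ 2`.
-/

namespace Stmt13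

variable {V E : Type*} [Fintype V] [Fintype E]

def edgesIn (ends : E → V × V) (S : Set V) : Set E :=
  {e | (ends e).1 ∈ S ∧ (ends e).2 ∈ S}

noncomputable def genus (ends : E → V × V) (S : Set V) : ℤ :=
  ((edgesIn ends S).ncard : ℤ) - (S.ncard : ℤ) + 1

def adjWithin (ends : E → V × V) (S : Set V) (a b : V) : Prop :=
  a ∈ S ∧ b ∈ S ∧ ∃ e : E, ends e = (a, b) ∨ ends e = (b, a)

def ConnectedOn (ends : E → V × V) (S : Set V) : Prop :=
  S.Nonempty ∧ ∀ a ∈ S, ∀ b ∈ S, Relation.ReflTransGen (adjWithin ends S) a b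

def crossEdges (ends : E → V × V) (S T : Set V) : Set E :=
  {e | ((ends e).1 ∈ S ∧ (ends e).2 ∈ T) ∨ ((ends e).1 ∈ T ∧ (ends e).2 ∈ S)}

end Stmt13

/-!
Put `P = H ∩ Z'`. Then `Z ∪ H` is the disjoint union of `Z ∪ P` and the pieces `H i`, no edge
joins two pieces, and `e i` counts the edges from `H i` to `Z ∪ P`; counting edges gives
`g(Z ∪ H) = g(Z ∪ P) + Σ (g(H i) + e i - 1)`, while gluing `Z` to `H` gives
`g(Z ∪ H) = g(Z) + g(H) + m₀ - 1`. Genus is superadditive over disjoint nonempty subsets of a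
connected set: contracting the subsets leaves a connected graph, which has at least as many edges
as vertices minus one. Hence `g(Z ∪ P) ≤ g(Z') = 0` and `Σ g(H i) ≤ g(H)`, and with `g(Z) = 0`
this leaves `Σ (e i - 1) ≥ m₀ - 1`.
-/

open Function

namespace Stmt13

lemma ncard_iUnion_eq_sum {α ι : Type*} [Finite α] [Fintype ι] {s : ι → Set α}
    (h : Pairwise (Disjoint on s)) : (⋃ i, s i).ncard = ∑ i, (s i).ncard := by
  rw [Set.ncard_iUnion_of_finite (fun _ => Set.toFinite _) h, finsum_eq_sum_of_fintype]

lemma eq_of_mem_of_pairwise_disjoint {α ι : Type*} {s : ι → Set α} (h : Pairwise (Disjoint on s))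
    {a : α} {i j : ι} (hi : a ∈ s i) (hj : a ∈ s j) : i = j :=
  h.eq (Set.not_disjoint_iff.2 ⟨a, hi, hj⟩)

variable {V E : Type*} {ends : E → V × V}

lemma crossEdges_comm (S T : Set V) : crossEdges ends S T = crossEdges ends T S := by
  ext ε
  simp only [crossEdges, Set.mem_ofPred_eq]
  tauto

lemma crossEdges_union_right (S T₁ T₂ : Set V) :
    crossEdges ends S (T₁ ∪ T₂) = crossEdges ends S T₁ ∪ crossEdges ends S T₂ := by
  ext ε
  simp only [crossEdges, Set.mem_ofPred_eq, Set.mem_union]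
  tauto

lemma crossEdges_iUnion_right {ι : Sort*} (S : Set V) (T : ι → Set V) :
    crossEdges ends S (⋃ i, T i) = ⋃ i, crossEdges ends S (T i) := by
  ext ε
  simp only [crossEdges, Set.mem_ofPred_eq, Set.mem_iUnion]
  grind

lemma edgesIn_union (S T : Set V) :
    edgesIn ends (S ∪ T) = edgesIn ends S ∪ edgesIn ends T ∪ crossEdges ends S T := by
  ext ε
  simp only [edgesIn, crossEdges, Set.mem_ofPred_eq, Set.mem_union]
  tauto

lemma edgesIn_mono {S T : Set V} (h : S ⊆ T) : edgesIn ends S ⊆ edgesIn ends T :=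
  fun _ hε => ⟨h hε.1, h hε.2⟩

lemma genus_singleton_nonneg (v : V) : 0 ≤ genus ends {v} := by
  simp [genus]

lemma crossEdges_sdiff_eq {ι : Type*} {R : Set V} {S : ι → Set V} (hRS : ∀ i, Disjoint R (S i))
    (hcross : Pairwise fun i j => crossEdges ends (S i) (S j) = ∅) (i : ι) :
    crossEdges ends (S i) ((R ∪ ⋃ j, S j) \ S i) = crossEdges ends (S i) R := by
  have outside : ∀ {v}, v ∈ (R ∪ ⋃ j, S j) \ S i → v ∈ R ∨ ∃ j, j ≠ i ∧ v ∈ S j := by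
    rintro v ⟨hv | hv, hvi⟩
    · exact Or.inl hv
    · obtain ⟨j, hj⟩ := Set.mem_iUnion.1 hv
      exact Or.inr ⟨j, fun h => hvi (h ▸ hj), hj⟩
  have not_cross : ∀ {ε j}, j ≠ i → ε ∉ crossEdges ends (S i) (S j) := by
    intro ε j hj
    simp [hcross hj.symm]
  ext ε
  constructor
  · rintro (⟨h₁, h₂⟩ | ⟨h₁, h₂⟩)
    · rcases outside h₂ with h₂ | ⟨j, hj, h₂⟩
      exacts [Or.inl ⟨h₁, h₂⟩, (not_cross hj (Or.inl ⟨h₁, h₂⟩)).elim]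
    · rcases outside h₁ with h₁ | ⟨j, hj, h₁⟩
      exacts [Or.inr ⟨h₁, h₂⟩, (not_cross hj (Or.inr ⟨h₁, h₂⟩)).elim]
  · have hR : R ⊆ (R ∪ ⋃ j, S j) \ S i := fun v hv =>
      ⟨Or.inl hv, Set.disjoint_left.1 (hRS i) hv⟩
    rintro (⟨h₁, h₂⟩ | ⟨h₁, h₂⟩)
    exacts [Or.inl ⟨h₁, hR h₂⟩, Or.inr ⟨hR h₁, h₂⟩]

section PieceGraph

variable {ι : Type*} {S : ι → Set V}

variable (ends S) in
def pieceGraph : SimpleGraph ι :=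
  SimpleGraph.fromRel fun i j => (crossEdges ends (S i) (S j)).Nonempty

lemma pieceGraph_connected (hdisj : Pairwise (Disjoint on S)) (hne : ∀ i, (S i).Nonempty)
    (hT : ConnectedOn ends (⋃ i, S i)) : (pieceGraph ends S).Connected := by
  obtain ⟨a, ha⟩ := hT.1
  obtain ⟨i, hai⟩ := Set.mem_iUnion.1 ha
  have reach : ∀ c, Relation.ReflTransGen (adjWithin ends (⋃ i, S i)) a c →
      ∀ k, c ∈ S k → (pieceGraph ends S).Reachable i k := by
    intro c hac
    induction hac with
    | refl => exact fun k hak => eq_of_mem_of_pairwise_disjoint hdisj hai hak ▸ .rfl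
    | @tail c d _ hcd ih =>
      intro k hdk
      obtain ⟨hc, -, ε, hε⟩ := hcd
      obtain ⟨k', hck'⟩ := Set.mem_iUnion.1 hc
      refine (ih k' hck').trans ?_
      by_cases hkk : k' = k
      · exact hkk ▸ .rfl
      · refine SimpleGraph.Adj.reachable ⟨hkk, Or.inl ⟨ε, ?_⟩⟩
        rcases hε with h | h <;> simp [crossEdges, h, hck', hdk]
  refine (SimpleGraph.connected_iff_exists_forall_reachable _).2 ⟨i, fun j => ?_⟩
  obtain ⟨b, hbj⟩ := hne j
  exact reach b (hT.2 a ha b (Set.mem_iUnion.2 ⟨j, hbj⟩)) j hbj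

lemma ncard_edgeSet_pieceGraph_le [Finite E] (hdisj : Pairwise (Disjoint on S)) :
    (pieceGraph ends S).edgeSet.ncard ≤
      (edgesIn ends (⋃ i, S i) \ ⋃ i, edgesIn ends (S i)).ncard := by
  rcases isEmpty_or_nonempty ι with hι | hι
  · simp [Set.eq_empty_of_isEmpty]
  choose! piece hpiece using fun v (hv : v ∈ ⋃ i, S i) => Set.mem_iUnion.1 hv
  have piece_eq : ∀ {v i}, v ∈ S i → piece v = i := fun {v i} hv =>
    eq_of_mem_of_pairwise_disjoint hdisj (hpiece v (Set.mem_iUnion_of_mem i hv)) hv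
  refine (Set.ncard_le_ncard ?_ (Set.toFinite _)).trans
    (Set.ncard_image_le (f := fun ε => s(piece (ends ε).1, piece (ends ε).2)) (Set.toFinite _))
  intro p hp
  induction p using Sym2.ind with | h i j => ?_
  obtain ⟨hij, hε⟩ := hp
  obtain ⟨ε, hε⟩ : (crossEdges ends (S i) (S j)).Nonempty := by
    rcases hε with hε | hε
    exacts [hε, crossEdges_comm (S j) (S i) ▸ hε]
  refine ⟨ε, ⟨?_, ?_⟩, ?_⟩
  · rcases hε with h | h
    exacts [⟨Set.mem_iUnion_of_mem i h.1, Set.mem_iUnion_of_mem j h.2⟩,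
      ⟨Set.mem_iUnion_of_mem j h.1, Set.mem_iUnion_of_mem i h.2⟩]
  · simp only [Set.mem_iUnion, not_exists]
    intro k ⟨h₁, h₂⟩
    rcases hε with h | h
    · exact hij ((eq_of_mem_of_pairwise_disjoint hdisj h.1 h₁).trans
        (eq_of_mem_of_pairwise_disjoint hdisj h.2 h₂).symm)
    · exact hij ((eq_of_mem_of_pairwise_disjoint hdisj h.2 h₂).trans
        (eq_of_mem_of_pairwise_disjoint hdisj h.1 h₁).symm)
  · rcases hε with h | h
    · simp [piece_eq h.1, piece_eq h.2]
    · simp [piece_eq h.1, piece_eq h.2, Sym2.eq_swap]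

end PieceGraph

variable [Finite V] [Finite E]

lemma genus_union {S T : Set V} (h : Disjoint S T) :
    genus ends (S ∪ T) = genus ends S + genus ends T + (crossEdges ends S T).ncard - 1 := by
  have hST : Disjoint (edgesIn ends S) (edgesIn ends T) :=
    Set.disjoint_left.2 fun ε hS hT => Set.disjoint_left.1 h hS.1 hT.1
  have hcross : Disjoint (edgesIn ends S ∪ edgesIn ends T) (crossEdges ends S T) := by
    rw [Set.disjoint_left] at h ⊢
    rintro ε (⟨h₁, h₂⟩ | ⟨h₁, h₂⟩) (⟨h₁', h₂'⟩ | ⟨h₁', h₂'⟩)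
    exacts [h h₂ h₂', h h₁ h₁', h h₁' h₁, h h₂' h₂]
  simp only [genus, edgesIn_union, Set.ncard_union_eq hcross, Set.ncard_union_eq hST,
    Set.ncard_union_eq h]
  push_cast
  ring

theorem sum_genus_le_genus_iUnion {ι : Type*} [Fintype ι] {S : ι → Set V}
    (hdisj : Pairwise (Disjoint on S)) (hne : ∀ i, (S i).Nonempty)
    (hT : ConnectedOn ends (⋃ i, S i)) :
    ∑ i, genus ends (S i) ≤ genus ends (⋃ i, S i) := by
  set X := edgesIn ends (⋃ i, S i) \ ⋃ i, edgesIn ends (S i)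
  have hcard : Fintype.card ι ≤ X.ncard + 1 := by
    have := (pieceGraph_connected hdisj hne hT).card_vert_le_card_edgeSet_add_one
    rw [Nat.card_eq_fintype_card, Nat.card_coe_set_eq] at this
    linarith [ncard_edgeSet_pieceGraph_le (ends := ends) hdisj]
  have hE : (edgesIn ends (⋃ i, S i)).ncard = ∑ i, (edgesIn ends (S i)).ncard + X.ncard := by
    have hdisjE : Pairwise (Disjoint on fun i => edgesIn ends (S i)) := fun i j hij =>
      Set.disjoint_left.2 fun ε hi hj => Set.disjoint_left.1 (hdisj hij) hi.1 hj.1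
    rw [← ncard_iUnion_eq_sum hdisjE, ← Set.ncard_union_eq Set.disjoint_sdiff_right,
      Set.union_sdiff_cancel (Set.iUnion_subset fun i => edgesIn_mono (Set.subset_iUnion S i))]
  simp only [genus, hE, ncard_iUnion_eq_sum hdisj, Finset.sum_add_distrib, Finset.sum_sub_distrib]
  push_cast
  simp only [Finset.sum_const, Finset.card_univ, nsmul_eq_mul, mul_one]
  linarith [(by exact_mod_cast hcard : (Fintype.card ι : ℤ) ≤ X.ncard + 1)]

theorem sum_genus_le_genus {ι : Type*} [Fintype ι] {S : ι → Set V} {T : Set V}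
    (hT : ConnectedOn ends T) (hdisj : Pairwise (Disjoint on S)) (hne : ∀ i, (S i).Nonempty)
    (hsub : ∀ i, S i ⊆ T) :
    ∑ i, genus ends (S i) ≤ genus ends T := by
  classical
  set R := T \ ⋃ i, S i
  have : Fintype R := Fintype.ofFinite R
  set S' : ι ⊕ R → Set V := Sum.elim S fun v => {v.1}
  have hS' : ⋃ x, S' x = T := by
    rw [Set.iUnion_sum]
    simp only [S', Sum.elim_inl, Sum.elim_inr, Set.iUnion_of_singleton_coe]
    exact Set.union_sdiff_cancel (Set.iUnion_subset hsub)
  have hdisj' : Pairwise (Disjoint on S') := by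
    rintro (i | v) (j | w) h
    · exact hdisj fun hij => h (congrArg _ hij)
    · exact Set.disjoint_singleton_right.2 fun hw => w.2.2 (Set.mem_iUnion_of_mem i hw)
    · exact Set.disjoint_singleton_left.2 fun hv => v.2.2 (Set.mem_iUnion_of_mem j hv)
    · exact Set.disjoint_singleton.2 fun hvw => h (congrArg _ (Subtype.ext hvw))
  have hne' : ∀ x, (S' x).Nonempty := by
    rintro (i | v)
    exacts [hne i, Set.singleton_nonempty _]
  have hpadded := sum_genus_le_genus_iUnion hdisj' hne' (hS' ▸ hT)
  rw [Fintype.sum_sum_type, hS'] at hpadded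
  have hsingletons : 0 ≤ ∑ v : R, genus ends {v.1} :=
    Finset.sum_nonneg fun v _ => genus_singleton_nonneg _
  simp only [S', Sum.elim_inl, Sum.elim_inr] at hpadded
  linarith

theorem genus_le_genus_of_subset {S T : Set V} (hT : ConnectedOn ends T) (hST : S ⊆ T)
    (hS : S.Nonempty) : genus ends S ≤ genus ends T := by
  simpa using sum_genus_le_genus (S := fun _ : Unit => S) hT (Subsingleton.pairwise)
    (fun _ => hS) (fun _ => hST)

theorem genus_union_iUnion {ι : Type*} [Fintype ι] {R : Set V} {S : ι → Set V}
    (hRS : ∀ i, Disjoint R (S i)) (hdisj : Pairwise (Disjoint on S))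
    (hcross : Pairwise fun i j => crossEdges ends (S i) (S j) = ∅) :
    genus ends (R ∪ ⋃ i, S i) =
      genus ends R + ∑ i, (genus ends (S i) + ((crossEdges ends (S i) R).ncard - 1)) := by
  classical
  suffices ∀ s : Finset ι, genus ends (R ∪ ⋃ i ∈ s, S i) =
      genus ends R + ∑ i ∈ s, (genus ends (S i) + ((crossEdges ends (S i) R).ncard - 1)) by
    simpa using this Finset.univ
  intro s
  induction s using Finset.induction_on with
  | empty => simp
  | insert a s ha ih =>
    have hne : ∀ i ∈ s, i ≠ a := fun i hi => ne_of_mem_of_not_mem hi ha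
    have hdisj_a : Disjoint (R ∪ ⋃ i ∈ s, S i) (S a) :=
      Set.disjoint_union_left.2 ⟨hRS a, Set.disjoint_iUnion₂_left.2 fun i hi => hdisj (hne i hi)⟩
    have hcross_a : crossEdges ends (R ∪ ⋃ i ∈ s, S i) (S a) = crossEdges ends (S a) R := by
      rw [crossEdges_comm, crossEdges_union_right]
      simp only [crossEdges_iUnion_right]
      rw [Set.iUnion_eq_empty.2 fun i => Set.iUnion_eq_empty.2 fun hi => hcross (hne i hi).symm,
        Set.union_empty]
    rw [Finset.set_biUnion_insert, Set.union_comm (S a), ← Set.union_assoc, genus_union hdisj_a,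
      ih, hcross_a, Finset.sum_insert ha]
    ring

end Stmt13

lemma exists_four_le_or_two_le_two_le {ι : Type*} [Fintype ι] {e : ι → ℕ}
    (h : 3 ≤ ∑ i, ((e i : ℤ) - 1)) : (∃ i, 4 ≤ e i) ∨ ∃ i j, i ≠ j ∧ 2 ≤ e i ∧ 2 ≤ e j := by
  classical
  by_contra! hcon
  obtain ⟨hlt4, hlt2⟩ := hcon
  by_cases hex : ∃ i, 2 ≤ e i
  · obtain ⟨i, hi⟩ := hex
    have hsum : ∑ j, ((e j : ℤ) - 1) ≤ ∑ j, if j = i then (e i : ℤ) - 1 else 0 := by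
      refine Finset.sum_le_sum fun j _ => ?_
      split_ifs with hj
      · rw [hj]
      · have := hlt2 i j (Ne.symm hj) hi
        omega
    simp only [Finset.sum_ite_eq', Finset.mem_univ, if_true] at hsum
    have := hlt4 i
    omega
  · push Not at hex
    have : ∑ j, ((e j : ℤ) - 1) ≤ 0 := Finset.sum_nonpos fun j _ => by have := hex j; omega
    omega

open Stmt13 in
theorem stmt_13_general {V E : Type*} [Fintype V] [Fintype E] (ends : E → V × V)
    (Z H Z' : Set V) (l : ℕ) (Hc : Fin l → Set V) (m₀ : ℕ) (e : Fin l → ℕ)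
    -- Z connected of genus 0
    (hZcon : ConnectedOn ends Z) (hZ0 : genus ends Z = 0)
    -- H is a connected component of the complement of Z, meeting Z along m₀ ≥ 4 edges
    (hHcon : ConnectedOn ends H) (hHZ : Disjoint Z H)
    (hm₀ : (crossEdges ends Z H).ncard = m₀) (hm₀4 : 4 ≤ m₀)
    -- Z' is a connected genus-0 subgraph containing Z but not H
    (hZ'con : ConnectedOn ends Z') (hZ'0 : genus ends Z' = 0)
    (hZZ' : Z ⊆ Z')
    -- the Hc i are the connected components of H \ Z'
    (hHccon : ∀ i, ConnectedOn ends (Hc i))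
    (hHcdisj : ∀ i j, i ≠ j → Disjoint (Hc i) (Hc j))
    (hHccover : (⋃ i, Hc i) = H \ Z')
    (hHcnocross : ∀ i j, i ≠ j → crossEdges ends (Hc i) (Hc j) = ∅)
    -- e i is the number of edges connecting Hc i to (Z ∪ H) \ Hc i
    (he : ∀ i, (crossEdges ends (Hc i) ((Z ∪ H) \ Hc i)).ncard = e i) :
    ((m₀ : ℤ) - 1 ≤ ∑ i : Fin l, ((e i : ℤ) - 1)) ∧ (3 ≤ (m₀ : ℤ) - 1) ∧
      ((∃ i, 4 ≤ e i) ∨ ∃ i j, i ≠ j ∧ 2 ≤ e i ∧ 2 ≤ e j) := by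
  set P := H ∩ Z'
  have hHc_sub : ∀ i, Hc i ⊆ H \ Z' := fun i => hHccover ▸ Set.subset_iUnion Hc i
  have hdisj : ∀ i, Disjoint (Z ∪ P) (Hc i) := fun i => Set.disjoint_union_left.2
    ⟨hHZ.mono_right ((hHc_sub i).trans Set.sdiff_subset),
      Set.disjoint_left.2 fun v hv hvi => (hHc_sub i hvi).2 hv.2⟩
  have hZH : Z ∪ H = (Z ∪ P) ∪ ⋃ i, Hc i := by
    rw [hHccover, Set.union_assoc, Set.inter_union_sdiff]
  have hsplit : genus ends (Z ∪ H) =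
      genus ends (Z ∪ P) + ∑ i, (genus ends (Hc i) + ((e i : ℤ) - 1)) := by
    rw [hZH, genus_union_iUnion hdisj hHcdisj hHcnocross]
    simp only [← he, hZH, crossEdges_sdiff_eq hdisj hHcnocross]
  have hglue : genus ends (Z ∪ H) = genus ends Z + genus ends H + m₀ - 1 := by
    rw [genus_union hHZ, hm₀]
  have hZP : genus ends (Z ∪ P) ≤ 0 := hZ'0 ▸ genus_le_genus_of_subset hZ'con
    (Set.union_subset hZZ' Set.inter_subset_right) (hZcon.1.mono Set.subset_union_left)
  have hHc : ∑ i, genus ends (Hc i) ≤ genus ends H := sum_genus_le_genus hHcon hHcdisj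
    (fun i => (hHccon i).1) (fun i => (hHc_sub i).trans Set.sdiff_subset)
  have hsum : (m₀ : ℤ) - 1 ≤ ∑ i, ((e i : ℤ) - 1) := by
    rw [Finset.sum_add_distrib] at hsplit
    linarith
  have hm₀3 : (3 : ℤ) ≤ m₀ - 1 := by omega
  exact ⟨hsum, hm₀3, exists_four_le_or_two_le_two_le (hm₀3.trans hsum)⟩

open Stmt13 in
theorem stmt_13 {V E : Type*} [Fintype V] [Fintype E] (ends : E → V × V)
    (Z H Z' : Set V) (l : ℕ) (Hc : Fin l → Set V) (m₀ : ℕ) (e : Fin l → ℕ)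
    -- Γ connected
    (hΓ : ConnectedOn ends (Set.univ : Set V))
    -- Z connected of genus 0
    (hZcon : ConnectedOn ends Z) (hZ0 : genus ends Z = 0)
    -- H is a connected component of the complement of Z, meeting Z along m₀ ≥ 4 edges
    (hHcon : ConnectedOn ends H) (hHZ : Disjoint Z H)
    (hcomp : ∀ ε : E, ((ends ε).1 ∈ H → (ends ε).2 ∈ H ∪ Z) ∧
      ((ends ε).2 ∈ H → (ends ε).1 ∈ H ∪ Z))
    (hm₀ : (crossEdges ends Z H).ncard = m₀) (hm₀4 : 4 ≤ m₀)
    -- Z' is a connected genus-0 subgraph containing Z but not H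
    (hZ'con : ConnectedOn ends Z') (hZ'0 : genus ends Z' = 0)
    (hZZ' : Z ⊆ Z') (hHZ' : ¬ H ⊆ Z')
    -- the Hc i are the connected components of H \ Z'
    (hHccon : ∀ i, ConnectedOn ends (Hc i))
    (hHcdisj : ∀ i j, i ≠ j → Disjoint (Hc i) (Hc j))
    (hHccover : (⋃ i, Hc i) = H \ Z')
    (hHcnocross : ∀ i j, i ≠ j → crossEdges ends (Hc i) (Hc j) = ∅)
    -- e i is the number of edges connecting Hc i to (Z ∪ H) \ Hc i
    (he : ∀ i, (crossEdges ends (Hc i) ((Z ∪ H) \ Hc i)).ncard = e i) :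
    ((m₀ : ℤ) - 1 ≤ ∑ i : Fin l, ((e i : ℤ) - 1)) ∧ (3 ≤ (m₀ : ℤ) - 1) ∧
      ((∃ i, 4 ≤ e i) ∨ ∃ i j, i ≠ j ∧ 2 ≤ e i ∧ 2 ≤ e j) :=
  stmt_13_general ends Z H Z' l Hc m₀ e hZcon hZ0 hHcon hHZ hm₀ hm₀4 hZ'con hZ'0 hZZ' hHccon hHcdisj
    hHccover hHcnocross he
end
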